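/- Under the Protocol 2 model: if N ≥ 2 and an attack (U_1,…,U_{N+1}) satisfies the no-error conditions (T), (Z) and (X), then Eve's final probe state is the same for all inputs: there exists a single unit vector f ∈ EuclideanSpace ℂ (Fin d) such that for every bitstring i and every m : Finset (Fin N), Ψ_m(δ_i) = f ⊗ δ_i ⊗ δ_{i∧m}. -/

import Mathlib

/-!
Protocol 2 model (semi-quantum key distribution, measure-resend):
see Boyer, Gelles, Kenigsberg, Mor, "Semi-Quantum Key Distribution".
-/

namespace SQKD2

/-- Bitstrings of length `N`. -/
abbrev Bits (N : ℕ) := Fin N → Bool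

/-- Index type of the global state space: Eve's probe, the `N` travelling qubits,
Bob's register. -/
abbrev Idx (N d : ℕ) := Fin d × Bits N × Bits N

/-- The global state space. -/
abbrev H (N d : ℕ) := EuclideanSpace ℂ (Idx N d)

/-- The mask `i ∧ m`. -/
def mask {N : ℕ} (i : Bits N) (m : Finset (Fin N)) : Bits N :=
  fun k => if k ∈ m then i k else false

/-- The underlying function of Bob's measure-resend permutation `M_k` on basis
indices: `(a, j, b) ↦ (a, j, b')` where `b'` agrees with `b` except
`b' k = b k XOR j k`. -/
def mPermFun {N d : ℕ} (k : Fin N) : Idx N d → Idx N d :=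
  fun p => (p.1, p.2.1, Function.update p.2.2 k (xor (p.2.2 k) (p.2.1 k)))

lemma mPermFun_involutive {N d : ℕ} (k : Fin N) :
    Function.Involutive (mPermFun (N := N) (d := d) k) := by
  rintro ⟨a, j, b⟩
  simp only [mPermFun]
  refine Prod.ext rfl (Prod.ext rfl ?_)
  funext l
  by_cases hl : l = k
  · subst hl
    simp [Bool.xor_assoc]
  · simp [Function.update_of_ne hl]

/-- Bob's measure-resend permutation of basis indices, as an equivalence. -/
def mPerm {N d : ℕ} (k : Fin N) : Idx N d ≃ Idx N d :=
  (mPermFun_involutive (N := N) (d := d) k).toPerm _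

/-- Bob's measure-resend unitary `M_k`. -/
noncomputable def M {N d : ℕ} (k : Fin N) : H N d ≃ₗᵢ[ℂ] H N d :=
  LinearIsometryEquiv.piLpCongrLeft 2 ℂ ℂ (mPerm (N := N) (d := d) k)

/-- A unitary of the global space acts only on the first two factors (Eve's
probe and the travelling qubits) if its matrix elements in the standard basis
are of the form `c((a',j'),(a,j))` when `b' = b` and vanish otherwise. -/
def ActsOnFirstTwo {N d : ℕ} (V : H N d ≃ₗᵢ[ℂ] H N d) : Prop :=
  ∃ c : (Fin d × Bits N) → (Fin d × Bits N) → ℂ,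
    ∀ (a : Fin d) (j b : Bits N) (a' : Fin d) (j' b' : Bits N),
      V (EuclideanSpace.single (a, j, b) 1) (a', j', b') =
        if b' = b then c (a', j') (a, j) else 0

/-- `W_m = U_{N+1} ∘ A_N ∘ U_N ∘ ⋯ ∘ A_1 ∘ U_1`, where `A_k = M_k` if `k ∈ m`
and the identity otherwise.  Here `U t` for `t : Fin (N+1)` is `U_{t+1}`. -/
noncomputable def W {N d : ℕ} (U : Fin (N + 1) → (H N d ≃ₗᵢ[ℂ] H N d)) (m : Finset (Fin N)) :
    H N d ≃ₗᵢ[ℂ] H N d :=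
  ((List.finRange N).foldl
    (fun acc k => (acc.trans (U k.castSucc)).trans
      (if k ∈ m then M k else LinearIsometryEquiv.refl ℂ (H N d)))
    (LinearIsometryEquiv.refl ℂ (H N d))).trans (U (Fin.last N))

/-- The initial state `ε₀ ⊗ φ ⊗ δ_0` for Alice's input `φ`. -/
noncomputable def init {N d : ℕ} (hd : 0 < d) (φ : EuclideanSpace ℂ (Bits N)) : H N d :=
  WithLp.toLp 2 fun (p : Idx N d) =>
    if p.1 = (⟨0, hd⟩ : Fin d) ∧ p.2.2 = (fun _ => false) then φ p.2.1 else 0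

/-- The final state `Ψ_m(φ) = W_m (ε₀ ⊗ φ ⊗ δ_0)`. -/
noncomputable def Psi {N d : ℕ} (U : Fin (N + 1) → (H N d ≃ₗᵢ[ℂ] H N d)) (hd : 0 < d)
    (m : Finset (Fin N)) (φ : EuclideanSpace ℂ (Bits N)) : H N d :=
  W U m (init hd φ)

/-- Condition (T): no error on TEST bits. -/
def CondT {N d : ℕ} (U : Fin (N + 1) → (H N d ≃ₗᵢ[ℂ] H N d)) (hd : 0 < d) : Prop :=
  ∀ (i : Bits N) (m : Finset (Fin N)) (a : Fin d) (j b : Bits N),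
    b ≠ mask i m → Psi U hd m (EuclideanSpace.single i 1) (a, j, b) = 0

/-- Condition (Z): no error on Z-CTRL bits. -/
def CondZ {N d : ℕ} (U : Fin (N + 1) → (H N d ≃ₗᵢ[ℂ] H N d)) (hd : 0 < d) : Prop :=
  ∀ (i : Bits N) (m : Finset (Fin N)) (a : Fin d) (j b : Bits N),
    j ≠ i → Psi U hd m (EuclideanSpace.single i 1) (a, j, b) = 0

/-- Condition (X): no error on X-CTRL bits. -/
def CondX {N d : ℕ} (U : Fin (N + 1) → (H N d ≃ₗᵢ[ℂ] H N d)) (hd : 0 < d) : Prop :=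
  ∀ (m : Finset (Fin N)) (k : Fin N), k ∉ m →
    ∀ i : Bits N, i k = false →
      ∀ (a : Fin d) (j b : Bits N),
        Psi U hd m (((Real.sqrt 2 : ℂ))⁻¹ •
            (EuclideanSpace.single i 1 +
              EuclideanSpace.single (Function.update i k true) 1)) (a, j, b) =
          Psi U hd m (((Real.sqrt 2 : ℂ))⁻¹ •
            (EuclideanSpace.single i 1 +
              EuclideanSpace.single (Function.update i k true) 1))
            (a, Function.update j k (!(j k)), b)

end SQKD2

/-!
Let `F_k = bobFlip k` flip Bob's `k`-th register bit. Every `U_t` and every `M_l` commutes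
with `F_k`, and `(1 + F_k) ∘ M_k = 1 + F_k` because `M_k` only ever swaps the two values of that bit. Hence
`(1 + F_k) ∘ W_{m ∪ {k}} = (1 + F_k) ∘ W_m`. By (T), `Ψ_m(δ_i)` lives at Bob's value `i ∧ m`,
so evaluating this identity at `(a, i, i ∧ m)` shows that the amplitude `Ψ_m(δ_i)(a, i, i ∧ m)`
does not depend on `m`. At `m = ∅`, (X) and (Z) show that it is unchanged when a bit of `i` is
switched on, so it does not depend on `i` either; (T) and (Z) kill every other coefficient, and
`f` has the norm of the unit vector `Ψ_∅(δ_0)`.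
-/

lemma Bool.apply_eq_apply_false_of_update_true {ι α : Type*} [Fintype ι] [DecidableEq ι]
    (g : (ι → Bool) → α) (hg : ∀ i k, i k = false → g (Function.update i k true) = g i)
    (i : ι → Bool) : g i = g fun _ => false := by
  suffices h : ∀ s : Finset ι, g (fun k => decide (k ∈ s)) = g fun _ => false by
    simpa using h (Finset.univ.filter (i · = true))
  intro s
  induction s using Finset.induction_on with
  | empty => simp
  | insert k s hk ih =>
    rw [← ih, ← hg (fun l => decide (l ∈ s)) k (by simpa using hk)]
    congr 1
    funext l
    by_cases hl : l = k <;> simp [hl]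

lemma EuclideanSpace.norm_eq_of_apply_eq_ite {𝕜 α β : Type*} [RCLike 𝕜] [Fintype α] [Fintype β]
    [DecidableEq β] {v : EuclideanSpace 𝕜 (α × β)} {f : EuclideanSpace 𝕜 α} {c : β}
    (h : ∀ a b, v (a, b) = if b = c then f a else 0) : ‖v‖ = ‖f‖ := by
  have hsq : ‖v‖ ^ 2 = ‖f‖ ^ 2 := by
    simp [EuclideanSpace.norm_sq_eq, Fintype.sum_prod_type, h, apply_ite]
  exact (sq_eq_sq₀ (norm_nonneg _) (norm_nonneg _)).1 hsq

namespace SQKD2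

variable {N d : ℕ}

def flipBit (k : Fin N) (b : Bits N) : Bits N := Function.update b k (!b k)

lemma flipBit_involutive (k : Fin N) : Function.Involutive (flipBit k) := by
  intro b
  simp [flipBit]

lemma flipBit_ne (k : Fin N) (b : Bits N) : flipBit k b ≠ b := fun h => by
  simpa [flipBit] using congrFun h k

noncomputable def bobRelabel (σ : Equiv.Perm (Bits N)) : H N d ≃ₗᵢ[ℂ] H N d :=
  LinearIsometryEquiv.piLpCongrLeft 2 ℂ ℂ ((Equiv.refl _).prodCongr ((Equiv.refl _).prodCongr σ))

lemma bobRelabel_apply (σ : Equiv.Perm (Bits N)) (v : H N d) (a : Fin d) (j b : Bits N) :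
    bobRelabel σ v (a, j, b) = v (a, j, σ.symm b) := rfl

noncomputable def bobFlip (k : Fin N) : H N d ≃ₗᵢ[ℂ] H N d :=
  bobRelabel (flipBit_involutive k).toPerm

lemma bobFlip_apply (k : Fin N) (v : H N d) (a : Fin d) (j b : Bits N) :
    bobFlip k v (a, j, b) = v (a, j, flipBit k b) := rfl

lemma M_apply (k : Fin N) (v : H N d) (p : Idx N d) : M k v p = v (mPermFun k p) := rfl

lemma ActsOnFirstTwo.apply_eq_sum {V : H N d ≃ₗᵢ[ℂ] H N d} (hV : ActsOnFirstTwo V) :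
    ∃ c : (Fin d × Bits N) → (Fin d × Bits N) → ℂ, ∀ (v : H N d) (a : Fin d) (j b : Bits N),
      V v (a, j, b) = ∑ x : Fin d × Bits N, c (a, j) x * v (x.1, x.2, b) := by
  obtain ⟨c, hc⟩ := hV
  refine ⟨c, fun v a j b => ?_⟩
  conv_lhs => rw [← (EuclideanSpace.basisFun (Idx N d) ℂ).sum_repr v]
  simp [Fintype.sum_prod_type, hc, mul_comm]

lemma ActsOnFirstTwo.commute_bobRelabel {V : H N d ≃ₗᵢ[ℂ] H N d} (hV : ActsOnFirstTwo V)
    (σ : Equiv.Perm (Bits N)) : Commute (bobRelabel σ) V := by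
  obtain ⟨c, hc⟩ := hV.apply_eq_sum
  ext v ⟨a, j, b⟩
  simp only [LinearIsometryEquiv.coe_mul, Function.comp_apply, bobRelabel_apply, hc]

lemma commute_bobFlip_M (k l : Fin N) : Commute (bobFlip (d := d) k) (M l) := by
  ext v ⟨a, j, b⟩
  simp only [LinearIsometryEquiv.coe_mul, Function.comp_apply, bobFlip_apply, M_apply, mPermFun]
  refine congrArg _ (Prod.ext rfl (Prod.ext rfl (funext fun n => ?_)))
  by_cases hn : n = k <;> by_cases hl : n = l <;> simp_all [flipBit, Function.update_apply]

noncomputable def bobSym (k : Fin N) (v : H N d) : H N d := v + bobFlip k v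

lemma bobSym_map_of_commute {k : Fin N} {G : H N d ≃ₗᵢ[ℂ] H N d} (h : Commute (bobFlip k) G)
    (v : H N d) : bobSym k (G v) = G (bobSym k v) := by
  rw [bobSym, bobSym, map_add]
  exact congrArg _ (DFunLike.congr_fun h.eq v)

lemma bobSym_M_self (k : Fin N) (v : H N d) : bobSym k (M k v) = bobSym k v := by
  ext ⟨a, j, b⟩
  simp only [bobSym, PiLp.add_apply, bobFlip_apply, M_apply, mPermFun]
  cases hj : j k
  · simp [flipBit]
  · simp [flipBit, add_comm]

noncomputable def bobOp (m : Finset (Fin N)) (l : Fin N) : H N d ≃ₗᵢ[ℂ] H N d :=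
  if l ∈ m then M l else LinearIsometryEquiv.refl ℂ (H N d)

lemma commute_bobFlip_bobOp (k : Fin N) (m : Finset (Fin N)) (l : Fin N) :
    Commute (bobFlip (d := d) k) (bobOp m l) := by
  unfold bobOp
  split
  exacts [commute_bobFlip_M k l, Commute.one_right _]

lemma bobSym_bobOp_insert {k : Fin N} {m : Finset (Fin N)} (hk : k ∉ m) (l : Fin N)
    (v : H N d) : bobSym k (bobOp (insert k m) l v) = bobSym k (bobOp m l v) := by
  by_cases hl : l = k
  · subst hl
    simp [bobOp, hk, bobSym_M_self]
  · simp [bobOp, hl]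

section Circuit

variable (U : Fin (N + 1) → (H N d ≃ₗᵢ[ℂ] H N d))

noncomputable def layer (m : Finset (Fin N)) (acc : H N d ≃ₗᵢ[ℂ] H N d) (l : Fin N) :
    H N d ≃ₗᵢ[ℂ] H N d :=
  (acc.trans (U l.castSucc)).trans (bobOp m l)

lemma W_apply (m : Finset (Fin N)) (v : H N d) :
    W U m v = U (Fin.last N)
      ((List.finRange N).foldl (layer U m) (LinearIsometryEquiv.refl ℂ (H N d)) v) := rfl

variable {U}

lemma bobSym_layer_insert (hU : ∀ t, ActsOnFirstTwo (U t)) {k : Fin N} {m : Finset (Fin N)}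
    (hk : k ∉ m) (l : Fin N) {Q Q' : H N d ≃ₗᵢ[ℂ] H N d}
    (hQ : ∀ x, bobSym k (Q x) = bobSym k (Q' x)) (x : H N d) :
    bobSym k (layer U (insert k m) Q l x) = bobSym k (layer U m Q' l x) := by
  have hop := commute_bobFlip_bobOp (d := d) k m l
  have hUl := (hU l.castSucc).commute_bobRelabel ((flipBit_involutive k).toPerm)
  change bobSym k (bobOp _ l (U l.castSucc (Q x))) = bobSym k (bobOp m l (U l.castSucc (Q' x)))
  rw [bobSym_bobOp_insert hk, bobSym_map_of_commute hop, bobSym_map_of_commute hUl, hQ,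
    ← bobSym_map_of_commute hUl, ← bobSym_map_of_commute hop]

lemma bobSym_W_insert (hU : ∀ t, ActsOnFirstTwo (U t)) {k : Fin N} {m : Finset (Fin N)}
    (hk : k ∉ m) (v : H N d) : bobSym k (W U (insert k m) v) = bobSym k (W U m v) := by
  have hUlast := (hU (Fin.last N)).commute_bobRelabel ((flipBit_involutive k).toPerm)
  rw [W_apply, W_apply, bobSym_map_of_commute hUlast, bobSym_map_of_commute hUlast]
  exact congrArg _ (List.foldl_rel
    (r := fun Q Q' : H N d ≃ₗᵢ[ℂ] H N d => ∀ x, bobSym k (Q x) = bobSym k (Q' x))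
    (fun _ => rfl) (fun l _ _ _ hQ => bobSym_layer_insert hU hk l hQ) v)

end Circuit

lemma add_apply_flipBit_eq {M : Type*} [AddZeroClass M] {g : Bits N → M} {c : Bits N}
    (hg : ∀ b, b ≠ c → g b = 0) {k : Fin N} {b : Bits N} (hc : c = b ∨ c = flipBit k b) :
    g b + g (flipBit k b) = g c := by
  rcases hc with rfl | rfl
  · rw [hg _ (flipBit_ne k c), add_zero]
  · rw [hg _ (flipBit_ne k b).symm, zero_add]

lemma mask_insert_eq_or {i : Bits N} {k : Fin N} {m : Finset (Fin N)} (hk : k ∉ m) :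
    mask i (insert k m) = mask i m ∨ mask i (insert k m) = flipBit k (mask i m) := by
  cases hik : i k
  · refine Or.inl (funext fun l => ?_)
    by_cases hl : l = k <;> simp_all [mask]
  · refine Or.inr (funext fun l => ?_)
    by_cases hl : l = k <;> simp_all [mask, flipBit]

lemma mask_empty (i : Bits N) : mask i ∅ = fun _ => false :=
  funext fun _ => if_neg (Finset.notMem_empty _)

variable {U : Fin (N + 1) → (H N d ≃ₗᵢ[ℂ] H N d)} {hd : 0 < d}

lemma Psi_smul_add (m : Finset (Fin N)) (c : ℂ) (φ ψ : EuclideanSpace ℂ (Bits N)) :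
    Psi U hd m (c • (φ + ψ)) = c • (Psi U hd m φ + Psi U hd m ψ) := by
  have hinit : init hd (c • (φ + ψ)) = c • (init hd φ + init hd ψ) := by
    ext p
    simp only [init, PiLp.smul_apply, PiLp.add_apply, smul_eq_mul]
    split_ifs <;> simp
  rw [Psi, hinit, map_smul, map_add]
  rfl

lemma Psi_apply_mask_insert (hU : ∀ t, ActsOnFirstTwo (U t)) (hT : CondT U hd) {k : Fin N}
    {m : Finset (Fin N)} (hk : k ∉ m) (i : Bits N) (a : Fin d) :
    Psi U hd (insert k m) (EuclideanSpace.single i 1) (a, i, mask i (insert k m)) =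
      Psi U hd m (EuclideanSpace.single i 1) (a, i, mask i m) := by
  have h : Psi U hd (insert k m) (.single i 1) (a, i, mask i m) +
        Psi U hd (insert k m) (.single i 1) (a, i, flipBit k (mask i m)) =
      Psi U hd m (.single i 1) (a, i, mask i m) +
        Psi U hd m (.single i 1) (a, i, flipBit k (mask i m)) :=
    congrArg (· (a, i, mask i m)) (bobSym_W_insert hU hk (init hd (.single i 1)))
  rwa [add_apply_flipBit_eq (fun b hb => hT i _ a i b hb) (mask_insert_eq_or hk),
    add_apply_flipBit_eq (fun b hb => hT i _ a i b hb) (Or.inl rfl)] at h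

lemma Psi_apply_mask_eq_empty (hU : ∀ t, ActsOnFirstTwo (U t)) (hT : CondT U hd)
    (i : Bits N) (m : Finset (Fin N)) (a : Fin d) :
    Psi U hd m (EuclideanSpace.single i 1) (a, i, mask i m) =
      Psi U hd ∅ (EuclideanSpace.single i 1) (a, i, fun _ => false) := by
  induction m using Finset.induction_on with
  | empty => rw [mask_empty]
  | insert k m hk ih => rw [Psi_apply_mask_insert hU hT hk, ih]

lemma Psi_empty_apply_update_true (hZ : CondZ U hd) (hX : CondX U hd) {i : Bits N} {k : Fin N}
    (hik : i k = false) (a : Fin d) :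
    Psi U hd ∅ (EuclideanSpace.single (Function.update i k true) 1)
        (a, Function.update i k true, fun _ => false) =
      Psi U hd ∅ (EuclideanSpace.single i 1) (a, i, fun _ => false) := by
  have hne : Function.update i k true ≠ i := fun h => by simpa [hik] using congrFun h k
  have h := hX ∅ k (Finset.notMem_empty k) i hik a i fun _ => false
  simp only [Psi_smul_add, PiLp.smul_apply, PiLp.add_apply, smul_eq_mul, hik,
    Bool.not_false] at h
  rw [hZ _ ∅ a i _ hne.symm, hZ i ∅ a _ _ hne, add_zero, zero_add] at h
  exact (mul_left_cancel₀ (by simp) h).symm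

lemma norm_Psi_single (m : Finset (Fin N)) (i : Bits N) :
    ‖Psi U hd m (EuclideanSpace.single i 1)‖ = 1 := by
  have hinit : init hd (EuclideanSpace.single i 1) =
      EuclideanSpace.single ((⟨0, hd⟩ : Fin d), i, fun _ => false) (1 : ℂ) := by
    ext ⟨a, j, b⟩
    simp only [init, PiLp.single_apply, Prod.mk.injEq]
    split_ifs <;> simp_all
  rw [Psi, LinearIsometryEquiv.norm_map, hinit, PiLp.norm_single, norm_one]

theorem protocol2_eve_state_constant_general (N d : ℕ) (hd : 0 < d)
    (U : Fin (N + 1) → (H N d ≃ₗᵢ[ℂ] H N d))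
    (hU : ∀ t, ActsOnFirstTwo (U t))
    (hT : CondT U hd) (hZ : CondZ U hd) (hX : CondX U hd) :
    ∃ f : EuclideanSpace ℂ (Fin d),
      ‖f‖ = 1 ∧
      ∀ (i : Bits N) (m : Finset (Fin N)) (a : Fin d) (j b : Bits N),
        Psi U hd m (EuclideanSpace.single i 1) (a, j, b) =
          if j = i ∧ b = mask i m then f a else 0 := by
  let f : EuclideanSpace ℂ (Fin d) := WithLp.toLp 2 fun a =>
    Psi U hd ∅ (.single (fun _ => false) 1) (a, fun _ => false, fun _ => false)
  have hamp : ∀ i m a, Psi U hd m (.single i 1) (a, i, mask i m) = f a := fun i m a => by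
    rw [Psi_apply_mask_eq_empty hU hT]
    exact Bool.apply_eq_apply_false_of_update_true
      (fun i => Psi U hd ∅ (.single i 1) (a, i, fun _ => false))
      (fun _ _ hik => Psi_empty_apply_update_true hZ hX hik a) i
  have hPsi : ∀ i m a j b, Psi U hd m (.single i 1) (a, j, b) =
      if j = i ∧ b = mask i m then f a else 0 := by
    intro i m a j b
    split_ifs with h
    · obtain ⟨rfl, rfl⟩ := h
      exact hamp j m a
    · by_cases hj : j = i
      · exact hT i m a j b fun hb => h ⟨hj, hb⟩
      · exact hZ i m a j b hj
  refine ⟨f, ?_, hPsi⟩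
  rw [← norm_Psi_single (U := U) (hd := hd) ∅ (fun _ => false)]
  refine (EuclideanSpace.norm_eq_of_apply_eq_ite (c := ((fun _ => false, fun _ => false) :
    Bits N × Bits N)) fun a ⟨j, b⟩ => ?_).symm
  simp only [hPsi, mask_empty, Prod.mk.injEq]

/-- If `N ≥ 2` and an attack satisfies the no-error conditions
(T), (Z) and (X), then Eve's final probe state is the same for all inputs:
there is a single unit vector `f` such that for every bitstring `i` and every
`m`, `Ψ_m(δ_i) = f ⊗ δ_i ⊗ δ_{i∧m}`. -/
theorem protocol2_eve_state_constant (N d : ℕ) (hN : 2 ≤ N) (hd : 0 < d)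
    (U : Fin (N + 1) → (H N d ≃ₗᵢ[ℂ] H N d))
    (hU : ∀ t, ActsOnFirstTwo (U t))
    (hT : CondT U hd) (hZ : CondZ U hd) (hX : CondX U hd) :
    ∃ f : EuclideanSpace ℂ (Fin d),
      ‖f‖ = 1 ∧
      ∀ (i : Bits N) (m : Finset (Fin N)) (a : Fin d) (j b : Bits N),
        Psi U hd m (EuclideanSpace.single i 1) (a, j, b) =
          if j = i ∧ b = mask i m then f a else 0 :=
  protocol2_eve_state_constant_general N d hd U hU hT hZ hX

end SQKD2
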